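/- With the 3-SAT construction of π_1, π_2 as described, suppose z_1, z_2 are natural numbers such that π_1^{z_1} π_2^{z_2} is fixpoint-free. Then for all i ∈ [n]: z_2 ≡ 0 mod p_i if and only if z_2 ≢ 0 mod p̄_i. -/

import Mathlib

/-! 3-SAT construction.  Variables are `x_1, …, x_n`, indexed by `Fin n`; the `j`-th clause is
`C_j = {x̃_{idx j 0}, x̃_{idx j 1}, x̃_{idx j 2}}` with `idx j` strictly monotone, where the
literal on variable `idx j a` is negated iff `neg j a = true`.  The first `2n` primes are
`p_1, …, p_n, p̄_1, …, p̄_n` with `p_i = P (i-1)` and `p̄_i = P (n+i-1)` for the enumeration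
`P` of the primes (`P 0 = 2`).  Every `Sym(ℓ)`-component is realized on `Fin ℓ`, and the
`ℓ`-cycle `([ℓ]) = (1,2,…,ℓ)` is realized as `finRotate ℓ`.  Fixpoint-freeness is checked on
the disjoint union of all components. -/

namespace SatConstruction

/-- `P i` is the `(i+1)`-st prime: `P 0 = 2`, `P 1 = 3`, ….  The prime `p_i` associated with
the positive literal `x_i` is `P (i-1)` and the prime `p̄_i` associated with the negative
literal `x̄_i` is `P (n+i-1)` (with `i ∈ [n]` one-indexed). -/
noncomputable def P (i : ℕ) : ℕ := Nat.nth Nat.Prime i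

/-- `p̃` of a literal: the prime of the underlying variable, according to the sign. -/
noncomputable def ptil (n : ℕ) {m : ℕ} (idx : Fin m → Fin 3 → Fin n)
    (neg : Fin m → Fin 3 → Bool) (j : Fin m) (a : Fin 3) : ℕ :=
  if neg j a then P (n + (idx j a).val) else P (idx j a).val

/-- `r_j = p̃_{i_1} p̃_{i_2} p̃_{i_3}` for the clause `C_j`. -/
noncomputable def r (n : ℕ) {m : ℕ} (idx : Fin m → Fin 3 → Fin n)
    (neg : Fin m → Fin 3 → Bool) (j : Fin m) : ℕ :=
  ptil n idx neg j 0 * ptil n idx neg j 1 * ptil n idx neg j 2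

/-- The underlying set of the group
`G = ∏_{i=1}^n (Sym(p_i) × Sym(p̄_i) × Sym(p_i p̄_i)^{(p_i-1)(p̄_i-1)+1}) × ∏_{j=1}^m Sym(r_j)`
(embedded in a symmetric group).  The `(p_i-1)(p̄_i-1)+1` copies of `Sym(p_i p̄_i)` are
indexed by `Option (Fin (p_i - 1) × Fin (p̄_i - 1))`: `none` is the component of `α_{i,3}`
and `some (l-1, k-1)` is the component of `α_{i,l,k}`. -/
abbrev Omega (n : ℕ) {m : ℕ} (idx : Fin m → Fin 3 → Fin n)
    (neg : Fin m → Fin 3 → Bool) : Type :=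
  (Σ i : Fin n,
      (Fin (P i.val) ⊕ Fin (P (n + i.val))) ⊕
        (Σ _c : Option (Fin (P i.val - 1) × Fin (P (n + i.val) - 1)),
          Fin (P i.val * P (n + i.val)))) ⊕
    (Σ j : Fin m, Fin (r n idx neg j))

/-- `π_1 = (α_1,…,α_n,β_1,…,β_m)` with
`α_i = (α_{i,1}, α_{i,2}, α_{i,3}, α_{i,1,1}, …, α_{i,p_i-1,p̄_i-1})`,
`α_{i,1} = ([p_i])`, `α_{i,2} = ([p̄_i])`, `α_{i,3} = id`,
`α_{i,l,k} = ([p_i p̄_i])^{s_{i,l,k}}` and `β_j = id`. -/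
noncomputable def pi1 (n : ℕ) {m : ℕ} (idx : Fin m → Fin 3 → Fin n)
    (neg : Fin m → Fin 3 → Bool) (s : Fin n → ℕ → ℕ → ℕ) :
    Equiv.Perm (Omega n idx neg) :=
  Equiv.sumCongr
    (Equiv.sigmaCongrRight fun i =>
      Equiv.sumCongr
        (Equiv.sumCongr (finRotate _) (finRotate _))
        (Equiv.sigmaCongrRight fun c =>
          match c with
          | none => Equiv.refl _
          | some (l, k) =>
              finRotate (P i.val * P (n + i.val)) ^ s i (l.val + 1) (k.val + 1)))
    (Equiv.refl _)

/-- `π_2 = (γ_1,…,γ_n,δ_1,…,δ_m)` with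
`γ_i = (γ_{i,1}, γ_{i,2}, γ_{i,3}, γ_{i,1,1}, …, γ_{i,p_i-1,p̄_i-1})`,
`γ_{i,1} = γ_{i,2} = id`, `γ_{i,3} = γ_{i,l,k} = ([p_i p̄_i])` and `δ_j = ([r_j])`. -/
noncomputable def pi2 (n : ℕ) {m : ℕ} (idx : Fin m → Fin 3 → Fin n)
    (neg : Fin m → Fin 3 → Bool) :
    Equiv.Perm (Omega n idx neg) :=
  Equiv.sumCongr
    (Equiv.sigmaCongrRight fun _i =>
      Equiv.sumCongr (Equiv.refl _) (Equiv.sigmaCongrRight fun _c => finRotate _))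
    (Equiv.sigmaCongrRight fun j => finRotate (r n idx neg j))


end SatConstruction

/-! Fixpoint-freeness on the components of `α_{i,1}`, `α_{i,2}`, `α_{i,3}` gives `p_i ∤ z_1`,
`p̄_i ∤ z_1` and `p_i p̄_i ∤ z_2`, and on the component of `α_{i,l,k}` it gives
`p_i p̄_i ∤ s_{i,l,k} z_1 + z_2`.  If neither prime divided `z_2`, then `l ≡ -z_2/z_1 (mod p_i)`
and `k ≡ -z_2/z_1 (mod p̄_i)` would violate the last condition. -/

namespace Equiv.Perm

theorem sumCongr_pow {α β : Type*} (e : Perm α) (f : Perm β) (k : ℕ) :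
    sumCongr e f ^ k = sumCongr (e ^ k) (f ^ k) := by
  simpa using (map_pow (sumCongrHom α β) (e, f) k).symm

theorem sigmaCongrRight_pow {α : Type*} {β : α → Type*} (F : ∀ a, Perm (β a)) (k : ℕ) :
    sigmaCongrRight F ^ k = sigmaCongrRight fun a => F a ^ k :=
  (map_pow (sigmaCongrRightHom β) F k).symm

end Equiv.Perm

open Fin.NatCast in
theorem finRotate_succ_pow_apply {N : ℕ} (k : ℕ) (x : Fin (N + 1)) :
    (finRotate (N + 1) ^ k) x = x + k := by
  induction k with
  | zero => simp
  | succ k ih => rw [pow_succ', Equiv.Perm.mul_apply, ih, finRotate_apply, Nat.cast_succ, add_assoc]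

theorem finRotate_pow_apply_eq_self_iff {N : ℕ} [NeZero N] (k : ℕ) (x : Fin N) :
    (finRotate N ^ k) x = x ↔ N ∣ k := by
  obtain ⟨N, rfl⟩ := Nat.exists_eq_succ_of_ne_zero (NeZero.ne N)
  rw [finRotate_succ_pow_apply, add_eq_left, Fin.natCast_eq_zero]

theorem Nat.Prime.exists_mod_eq_dvd_mul_add {p a b : ℕ} (hp : p.Prime) (ha : ¬ p ∣ a)
    (hb : ¬ p ∣ b) : ∃ l, 1 ≤ l ∧ l < p ∧ ∀ t, t % p = l → p ∣ t * a + b := by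
  have := Fact.mk hp
  have ha' : (a : ZMod p) ≠ 0 := by rwa [ne_eq, ZMod.natCast_eq_zero_iff]
  have hb' : (b : ZMod p) ≠ 0 := by rwa [ne_eq, ZMod.natCast_eq_zero_iff]
  set L : ZMod p := -b / a
  refine ⟨L.val, Nat.one_le_iff_ne_zero.2 ?_, L.val_lt, fun t ht => ?_⟩
  · rw [ne_eq, ZMod.val_eq_zero]
    exact div_ne_zero (neg_ne_zero.2 hb') ha'
  · have htL : (t : ZMod p) = L := by rw [← ZMod.natCast_mod, ht, ZMod.natCast_zmod_val]
    rw [← ZMod.natCast_eq_zero_iff]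
    push_cast
    rw [htL, div_mul_cancel₀ _ ha', neg_add_cancel]

namespace SatConstruction

theorem P_prime (i : ℕ) : (P i).Prime := Nat.prime_nth_prime i

instance (i : ℕ) : NeZero (P i) := ⟨(P_prime i).ne_zero⟩

theorem coprime_P_P_add {i j : ℕ} (hj : 0 < j) : (P i).Coprime (P (j + i)) :=
  (Nat.coprime_primes (P_prime _) (P_prime _)).2
    (Nat.nth_strictMono Nat.infinite_setOfPred_prime (by omega)).ne

section FixpointFree

variable {n m : ℕ} {idx : Fin m → Fin 3 → Fin n} {neg : Fin m → Fin 3 → Bool}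
  {s : Fin n → ℕ → ℕ → ℕ} {z1 z2 : ℕ}

theorem pi1_pow_mul_pi2_pow_apply_pos (i : Fin n) (x : Fin (P i.val)) :
    (pi1 n idx neg s ^ z1 * pi2 n idx neg ^ z2) (Sum.inl ⟨i, Sum.inl (Sum.inl x)⟩) =
      Sum.inl ⟨i, Sum.inl (Sum.inl ((finRotate _ ^ z1) x))⟩ := by
  simp [pi1, pi2, Equiv.Perm.sumCongr_pow, Equiv.Perm.sigmaCongrRight_pow, ← Equiv.Perm.one_def]

theorem pi1_pow_mul_pi2_pow_apply_neg (i : Fin n) (x : Fin (P (n + i.val))) :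
    (pi1 n idx neg s ^ z1 * pi2 n idx neg ^ z2) (Sum.inl ⟨i, Sum.inl (Sum.inr x)⟩) =
      Sum.inl ⟨i, Sum.inl (Sum.inr ((finRotate _ ^ z1) x))⟩ := by
  simp [pi1, pi2, Equiv.Perm.sumCongr_pow, Equiv.Perm.sigmaCongrRight_pow, ← Equiv.Perm.one_def]

theorem pi1_pow_mul_pi2_pow_apply_none (i : Fin n) (x : Fin (P i.val * P (n + i.val))) :
    (pi1 n idx neg s ^ z1 * pi2 n idx neg ^ z2) (Sum.inl ⟨i, Sum.inr ⟨none, x⟩⟩) =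
      Sum.inl ⟨i, Sum.inr ⟨none, (finRotate _ ^ z2) x⟩⟩ := by
  simp [pi1, pi2, Equiv.Perm.sumCongr_pow, Equiv.Perm.sigmaCongrRight_pow, ← Equiv.Perm.one_def]

theorem pi1_pow_mul_pi2_pow_apply_some (i : Fin n) (l : Fin (P i.val - 1))
    (k : Fin (P (n + i.val) - 1)) (x : Fin (P i.val * P (n + i.val))) :
    (pi1 n idx neg s ^ z1 * pi2 n idx neg ^ z2) (Sum.inl ⟨i, Sum.inr ⟨some (l, k), x⟩⟩) =
      Sum.inl ⟨i, Sum.inr ⟨some (l, k),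
        (finRotate _ ^ (s i (l.val + 1) (k.val + 1) * z1 + z2)) x⟩⟩ := by
  simp [pi1, pi2, Equiv.Perm.sumCongr_pow, Equiv.Perm.sigmaCongrRight_pow, ← Equiv.Perm.one_def,
    pow_add, pow_mul]

theorem not_P_dvd_z1_of_fixpointFree
    (hfpf : ∀ a, (pi1 n idx neg s ^ z1 * pi2 n idx neg ^ z2) a ≠ a) (i : Fin n) :
    ¬ P i.val ∣ z1 := fun h =>
  hfpf (Sum.inl ⟨i, Sum.inl (Sum.inl 0)⟩) <| by
    rw [pi1_pow_mul_pi2_pow_apply_pos, (finRotate_pow_apply_eq_self_iff _ _).2 h]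

theorem not_P_add_dvd_z1_of_fixpointFree
    (hfpf : ∀ a, (pi1 n idx neg s ^ z1 * pi2 n idx neg ^ z2) a ≠ a) (i : Fin n) :
    ¬ P (n + i.val) ∣ z1 := fun h =>
  hfpf (Sum.inl ⟨i, Sum.inl (Sum.inr 0)⟩) <| by
    rw [pi1_pow_mul_pi2_pow_apply_neg, (finRotate_pow_apply_eq_self_iff _ _).2 h]

theorem not_mul_dvd_z2_of_fixpointFree
    (hfpf : ∀ a, (pi1 n idx neg s ^ z1 * pi2 n idx neg ^ z2) a ≠ a) (i : Fin n) :
    ¬ P i.val * P (n + i.val) ∣ z2 := fun h =>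
  hfpf (Sum.inl ⟨i, Sum.inr ⟨none, 0⟩⟩) <| by
    rw [pi1_pow_mul_pi2_pow_apply_none, (finRotate_pow_apply_eq_self_iff _ _).2 h]

theorem not_mul_dvd_s_mul_z1_add_z2_of_fixpointFree
    (hfpf : ∀ a, (pi1 n idx neg s ^ z1 * pi2 n idx neg ^ z2) a ≠ a) (i : Fin n) {l k : ℕ}
    (hl : 1 ≤ l) (hlp : l < P i.val) (hk : 1 ≤ k) (hkq : k < P (n + i.val)) :
    ¬ P i.val * P (n + i.val) ∣ s i l k * z1 + z2 := by
  obtain ⟨l, rfl⟩ := Nat.exists_eq_add_of_le' hl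
  obtain ⟨k, rfl⟩ := Nat.exists_eq_add_of_le' hk
  intro h
  refine hfpf (Sum.inl ⟨i, Sum.inr ⟨some (⟨l, by omega⟩, ⟨k, by omega⟩), 0⟩⟩) ?_
  rw [pi1_pow_mul_pi2_pow_apply_some, (finRotate_pow_apply_eq_self_iff _ _).2 h]

end FixpointFree

theorem z2_dvd_iff_general
    (n m : ℕ) (idx : Fin m → Fin 3 → Fin n)
    (neg : Fin m → Fin 3 → Bool)
    (s : Fin n → ℕ → ℕ → ℕ)
    -- `s_{i,l,k}` is the unique number in `[0, p_i p̄_i - 1]` with `s_{i,l,k} ≡ l (mod p_i)`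
    -- and `s_{i,l,k} ≡ k (mod p̄_i)`, for `l ∈ [p_i - 1]` and `k ∈ [p̄_i - 1]`
    (hs : ∀ i : Fin n, ∀ l k : ℕ, 1 ≤ l → l < P i.val → 1 ≤ k → k < P (n + i.val) →
      s i l k < P i.val * P (n + i.val) ∧
        s i l k % P i.val = l ∧ s i l k % P (n + i.val) = k)
    (z1 z2 : ℕ)
    (hfpf : ∀ a : Omega n idx neg,
      (pi1 n idx neg s ^ z1 * pi2 n idx neg ^ z2) a ≠ a) :
    ∀ i : Fin n, (P i.val ∣ z2 ↔ ¬ P (n + i.val) ∣ z2) := by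
  intro i
  have hcop : (P i.val).Coprime (P (n + i.val)) := coprime_P_P_add i.pos
  refine ⟨fun hp hq => not_mul_dvd_z2_of_fixpointFree hfpf i (hcop.mul_dvd_of_dvd_of_dvd hp hq),
    fun hq => ?_⟩
  by_contra hp
  obtain ⟨l, hl, hlp, hdvd_l⟩ :=
    (P_prime _).exists_mod_eq_dvd_mul_add (not_P_dvd_z1_of_fixpointFree hfpf i) hp
  obtain ⟨k, hk, hkq, hdvd_k⟩ :=
    (P_prime _).exists_mod_eq_dvd_mul_add (not_P_add_dvd_z1_of_fixpointFree hfpf i) hq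
  obtain ⟨-, hsl, hsk⟩ := hs i l k hl hlp hk hkq
  exact not_mul_dvd_s_mul_z1_add_z2_of_fixpointFree hfpf i hl hlp hk hkq
    (hcop.mul_dvd_of_dvd_of_dvd (hdvd_l _ hsl) (hdvd_k _ hsk))

/-- If `π_1^{z_1} π_2^{z_2}` is fixpoint-free then for all `i ∈ [n]` we have
`z_2 ≡ 0 (mod p_i)` if and only if `z_2 ≢ 0 (mod p̄_i)`. -/
theorem z2_dvd_iff
    (n m : ℕ) (idx : Fin m → Fin 3 → Fin n) (hidx : ∀ j, StrictMono (idx j))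
    (neg : Fin m → Fin 3 → Bool)
    (s : Fin n → ℕ → ℕ → ℕ)
    -- `s_{i,l,k}` is the unique number in `[0, p_i p̄_i - 1]` with `s_{i,l,k} ≡ l (mod p_i)`
    -- and `s_{i,l,k} ≡ k (mod p̄_i)`, for `l ∈ [p_i - 1]` and `k ∈ [p̄_i - 1]`
    (hs : ∀ i : Fin n, ∀ l k : ℕ, 1 ≤ l → l < P i.val → 1 ≤ k → k < P (n + i.val) →
      s i l k < P i.val * P (n + i.val) ∧
        s i l k % P i.val = l ∧ s i l k % P (n + i.val) = k)
    (z1 z2 : ℕ)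
    (hfpf : ∀ a : Omega n idx neg,
      (pi1 n idx neg s ^ z1 * pi2 n idx neg ^ z2) a ≠ a) :
    ∀ i : Fin n, (P i.val ∣ z2 ↔ ¬ P (n + i.val) ∣ z2) :=
  z2_dvd_iff_general n m idx neg s hs z1 z2 hfpf

end SatConstruction
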